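/- arXiv:2103.16752 — 2 statements merged into one kernel-verified Lean document; each statement's English description precedes it below -/
import Mathlib

section
/- Let H be a symmetric matrix, M an invertible matrix with H = Q M⁻¹ for some matrix Q, and let N be a symmetric matrix. Suppose vectors w, w̃ satisfy w⁺ = w - M(w - w̃). Then (1/2)(‖w - w̃‖²_H - ‖w⁺ - w̃‖²_H) - ‖w - w̃‖²_N = (1/2)‖w - w̃‖²_G where G = Qᵀ + Q - Mᵀ H M - 2N. -/
open Matrix

theorem correction_step_identity {n : ℕ} (H Q M N : Matrix (Fin n) (Fin n) ℝ)
    (hH : H.IsSymm) (hN : N.IsSymm) (hM : IsUnit M) (hHQ : H = Q * M⁻¹)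
    (w wt wp : Fin n → ℝ) (hup : wp = w - M.mulVec (w - wt)) :
    (1/2) * ((w - wt) ⬝ᵥ H.mulVec (w - wt) - (wp - wt) ⬝ᵥ H.mulVec (wp - wt))
        - (w - wt) ⬝ᵥ N.mulVec (w - wt)
      = (1/2) * ((w - wt) ⬝ᵥ (Qᵀ + Q - Mᵀ * H * M - (2 : ℝ) • N).mulVec (w - wt)) := by
  have hdet := (Matrix.isUnit_iff_isUnit_det M).mp hM
  have hHM : H * M = Q := by rw [hHQ, Matrix.nonsing_inv_mul_cancel_right _ _ hdet]
  have hQT : Qᵀ = Mᵀ * H := by rw [← hHM, Matrix.transpose_mul, hH.eq]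
  subst hup
  rw [sub_right_comm]
  set d := w - wt with hd
  have key : ∀ x y : Fin n → ℝ, (M.mulVec x) ⬝ᵥ y = x ⬝ᵥ Mᵀ.mulVec y := by
    intro x y
    rw [dotProduct_comm, dotProduct_mulVec, ← Matrix.mulVec_transpose, dotProduct_comm]
  simp only [Matrix.mulVec_sub, Matrix.sub_mulVec, Matrix.add_mulVec,
    Matrix.smul_mulVec, dotProduct_sub, sub_dotProduct, dotProduct_add,
    dotProduct_smul, Matrix.mulVec_mulVec, key, hQT, hHM, mul_assoc, smul_eq_mul]
  ring
end

section
/- Let B ∈ ℝ^{n×d}, β > 0, α, τ ∈ ℝ with α + τ > 0. Define the block matrices Q₂ = [[βBᵀB, -αBᵀ], [-B, (1/β)I_n]] and M₂ = [[I_d, 0], [-τβB, (α+τ)I_n]]. Then M₂ is invertible and Q₂ M₂⁻¹ = [[(1 - ατ/(α+τ))βBᵀB, -(α/(α+τ))Bᵀ], [-(α/(α+τ))B, (1/((α+τ)β))I_n]], which is a symmetric matrix. -/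
/-!
`M₂` is block lower triangular with diagonal blocks `I` and `(α + τ) I`, so its inverse is again
lower triangular, `[[I, 0], [(τβ/(α+τ)) B, (1/(α+τ)) I]]`. Multiplying out blockwise gives `H₂`,
which is symmetric because its diagonal blocks are and its off-diagonal blocks are mutual transposes.
-/

open Matrix

section UnitLowerTriangular

variable {K : Type*} [Field K] {m n : Type*} [Fintype m] [Fintype n] [DecidableEq m] [DecidableEq n]

theorem Matrix.smul_one_mul_inv_smul_one {c : K} (hc : c ≠ 0) :
    c • (1 : Matrix n n K) * c⁻¹ • 1 = 1 := by
  rw [smul_mul_smul_comm, mul_inv_cancel₀ hc, one_mul, one_smul]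

theorem Matrix.isUnit_smul_one {c : K} (hc : c ≠ 0) : IsUnit (c • (1 : Matrix n n K)) :=
  .of_mul_eq_one _ (smul_one_mul_inv_smul_one hc)

theorem Matrix.inv_smul_one (c : K) : (c • (1 : Matrix n n K))⁻¹ = c⁻¹ • 1 := by
  rcases eq_or_ne c 0 with rfl | hc
  · simp
  · exact inv_eq_right_inv (smul_one_mul_inv_smul_one hc)

theorem Matrix.isUnit_fromBlocks_one_zero_smul_one (C : Matrix n m K) {c : K} (hc : c ≠ 0) :
    IsUnit (fromBlocks (1 : Matrix m m K) 0 C (c • (1 : Matrix n n K))) :=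
  isUnit_fromBlocks_zero₁₂.mpr ⟨isUnit_one, isUnit_smul_one hc⟩

theorem Matrix.inv_fromBlocks_one_zero_smul_one (C : Matrix n m K) {c : K} (hc : c ≠ 0) :
    (fromBlocks (1 : Matrix m m K) 0 C (c • (1 : Matrix n n K)))⁻¹ =
      fromBlocks 1 0 (-(c⁻¹ • C)) (c⁻¹ • 1) := by
  rw [inv_fromBlocks_zero₁₂_of_isUnit_iff _ _ _ (iff_of_true isUnit_one (isUnit_smul_one hc)),
    inv_one, inv_smul_one, Matrix.mul_one, smul_mul, Matrix.one_mul]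

end UnitLowerTriangular

theorem Matrix.isSymm_transpose_mul_self' {R : Type*} [CommSemiring R] {m n : Type*} [Fintype m]
    (B : Matrix m n R) : (Bᵀ * B).IsSymm := by
  rw [IsSymm, transpose_mul, transpose_transpose]

theorem Q2_M2_inv {n d : ℕ} (B : Matrix (Fin n) (Fin d) ℝ) (β α τ : ℝ)
    (hβ : 0 < β) (hατ : 0 < α + τ) :
    IsUnit (Matrix.fromBlocks (1 : Matrix (Fin d) (Fin d) ℝ) 0
        (-((τ * β) • B)) ((α + τ) • (1 : Matrix (Fin n) (Fin n) ℝ))) ∧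
    Matrix.fromBlocks (β • (Bᵀ * B)) (-(α • Bᵀ)) (-B) ((1/β) • 1) *
        (Matrix.fromBlocks (1 : Matrix (Fin d) (Fin d) ℝ) 0
          (-((τ * β) • B)) ((α + τ) • (1 : Matrix (Fin n) (Fin n) ℝ)))⁻¹
      = Matrix.fromBlocks ((1 - α * τ / (α + τ)) • β • (Bᵀ * B)) (-((α / (α + τ)) • Bᵀ))
          (-((α / (α + τ)) • B)) ((1 / ((α + τ) * β)) • 1) ∧
    (Matrix.fromBlocks ((1 - α * τ / (α + τ)) • β • (Bᵀ * B)) (-((α / (α + τ)) • Bᵀ))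
        (-((α / (α + τ)) • B))
        ((1 / ((α + τ) * β)) • (1 : Matrix (Fin n) (Fin n) ℝ))).IsSymm := by
  have hc : α + τ ≠ 0 := hατ.ne'
  have hβ₀ : β ≠ 0 := hβ.ne'
  refine ⟨isUnit_fromBlocks_one_zero_smul_one _ hc, ?_, ?_⟩
  · rw [inv_fromBlocks_one_zero_smul_one _ hc, fromBlocks_multiply]
    congr 1 <;> simp only [Matrix.mul_one, Matrix.mul_zero, zero_add, Matrix.mul_neg,
        Matrix.neg_mul, Matrix.mul_smul, Matrix.smul_mul, Matrix.one_mul, smul_smul] <;>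
      match_scalars <;> field_simp <;> ring
  · refine (isSymm_transpose_mul_self' B).smul β |>.smul _ |>.fromBlocks ?_ (isSymm_one.smul _)
    rw [transpose_neg, transpose_smul, transpose_transpose]
end
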